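/- Let Ω = [−1/2, 1/2] × Σ ⊂ ℝ × ℝ^{d−1} with Σ bounded measurable of positive measure, and let t ∈ ℝ. Define α_t(λ) := λ if λ_1 ∈ ℤ and α_t(λ) := λ + (t, 0, …, 0) if λ_1 ∉ ℤ. If Λ is a spectrum for Ω, then α_t is injective on Λ and α_t(Λ) is also a spectrum for Ω. -/

import Mathlib

/-!
On `Ω = [-1/2, 1/2] × Σ` the inner products factor as `⟨e_λ, e_μ⟩ = φ(λ₁ - μ₁) · 𝟙̂_Σ(μ₂ - λ₂)`
with `φ(a) = sin(πa)/(πa)`, which vanishes only on `ℤ ∖ {0}`. Split `Λ = Λ₀ ∪ Λ₁` according to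
whether `λ₁ ∈ ℤ`. For `λ ∈ Λ₀`, `μ ∈ Λ₁` the first factor is nonzero, so the second one vanishes,
and `e_λ` stays orthogonal to every shift of `e_μ` in the first variable. This gives orthogonality
of `E(α_t Λ)`, and injectivity of `α_t` since `𝟙̂_Σ(0) = |Σ| > 0`.
For completeness, let `f ⊥ E(α_t Λ)` and `g = f · e_{-(t,0)}`, so that `g ⊥ E(Λ₁)`. For `λ ∈ Λ₀`,
`e_{λ+(t,0)} ⊥ E(Λ₁)`; as `E(Λ₀) ⊥ E(Λ₁)` and `E(Λ)` is complete, `e_{λ+(t,0)}` lies in the closed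
span of `E(Λ₀)`, to which `f` is orthogonal. Hence `g ⊥ E(Λ)`, so `g = 0` and `f = 0`.
-/

open MeasureTheory Complex Set
open scoped Pointwise ENNReal RealInnerProductSpace

noncomputable section

/-- Euclidean space `ℝ^d`. -/
abbrev Ed (d : ℕ) := EuclideanSpace ℝ (Fin d)

/-- The exponential function `e_λ(x) = exp(2πi⟨λ,x⟩)` on `ℝ^d`. -/
def expF {d : ℕ} (l x : Ed d) : ℂ :=
  Complex.exp (2 * Real.pi * Complex.I * Complex.ofReal (inner ℝ l x : ℝ))

/-- The Fourier transform of the indicator function of `Ω ⊆ ℝ^d`. -/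
def ftInd {d : ℕ} (Om : Set (Ed d)) (xi : Ed d) : ℂ :=
  ∫ x in Om, Complex.exp (-(2 * Real.pi * Complex.I * Complex.ofReal (inner ℝ xi x : ℝ)))

/-- The exponential system `E(Λ)` is orthogonal in `L²(Ω)`. -/
def IsOrthSys {d : ℕ} (Om L : Set (Ed d)) : Prop :=
  ∀ l ∈ L, ∀ m ∈ L, l ≠ m →
    ∫ x in Om, expF l x * (starRingEnd ℂ) (expF m x) = 0

/-- `Λ` is a spectrum for `Ω`: the system `E(Λ)` is orthogonal and complete in `L²(Ω)`. -/
def IsSpectrum {d : ℕ} (Om L : Set (Ed d)) : Prop :=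
  IsOrthSys Om L ∧
  ∀ f : Ed d → ℂ, MemLp f 2 (volume.restrict Om) →
    (∀ l ∈ L, ∫ x in Om, f x * (starRingEnd ℂ) (expF l x) = 0) →
    f =ᵐ[volume.restrict Om] 0

/-- `f + Λ` is a tiling: `∑_{λ∈Λ} f(x-λ) = 1` a.e. -/
def IsTiling {E : Type*} [NormedAddCommGroup E] [MeasureSpace E]
    (f : E → ℝ) (L : Set E) : Prop :=
  ∀ᵐ x : E, ∑' l : L, ENNReal.ofReal (f (x - (l : E))) = 1

/-- `f + Λ` is a packing: `∑_{λ∈Λ} f(x-λ) ≤ 1` a.e. -/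
def IsPacking {E : Type*} [NormedAddCommGroup E] [MeasureSpace E]
    (f : E → ℝ) (L : Set E) : Prop :=
  ∀ᵐ x : E, ∑' l : L, ENNReal.ofReal (f (x - (l : E))) ≤ 1

/-- `Λ` is uniformly discrete with separation constant at least `δ`. -/
def UnifDiscrete {E : Type*} [PseudoMetricSpace E] (L : Set E) (δ : ℝ) : Prop :=
  ∀ l ∈ L, ∀ m ∈ L, l ≠ m → δ ≤ dist l m

/-- Weak convergence of a sequence of uniformly discrete sets. -/
def WeakLim {E : Type*} [SeminormedAddCommGroup E] (Ln : ℕ → Set E) (L : Set E) : Prop :=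
  ∀ ε > (0 : ℝ), ∀ R > (0 : ℝ), ∃ N : ℕ, ∀ n ≥ N,
    Ln n ∩ Metric.ball 0 R ⊆ L + Metric.ball 0 ε ∧
    L ∩ Metric.ball 0 R ⊆ Ln n + Metric.ball 0 ε

/-- The exponential `e_λ` on the product space `ℝ × ℝ^{d-1}`. -/
def expP {n : ℕ} (l x : ℝ × Ed n) : ℂ :=
  Complex.exp (2 * Real.pi * Complex.I * Complex.ofReal (l.1 * x.1 + (inner ℝ l.2 x.2 : ℝ)))

/-- `Λ` is a spectrum for `Ω ⊆ ℝ × ℝ^{d-1}`. -/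
def IsSpectrumP {n : ℕ} (Om L : Set (ℝ × Ed n)) : Prop :=
  (∀ l ∈ L, ∀ m ∈ L, l ≠ m →
    ∫ x in Om, expP l x * (starRingEnd ℂ) (expP m x) = 0) ∧
  ∀ f : ℝ × Ed n → ℂ, MemLp f 2 (volume.restrict Om) →
    (∀ l ∈ L, ∫ x in Om, f x * (starRingEnd ℂ) (expP l x) = 0) →
    f =ᵐ[volume.restrict Om] 0

open Classical in
/-- The map `α_t` fixing points with integer first coordinate and shifting the others by `t`. -/
def alphaT {n : ℕ} (t : ℝ) (l : ℝ × Ed n) : ℝ × Ed n :=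
  if ∃ k : ℤ, l.1 = (k : ℝ) then l else (l.1 + t, l.2)

section Exponentials

variable {n : ℕ}

lemma expP_add (a b x : ℝ × Ed n) : expP (a + b) x = expP a x * expP b x := by
  simp only [expP, ← Complex.exp_add, Prod.fst_add, Prod.snd_add, inner_add_left]
  push_cast
  ring_nf

lemma conj_expP (a x : ℝ × Ed n) : (starRingEnd ℂ) (expP a x) = expP (-a) x := by
  simp only [expP, ← Complex.exp_conj, map_mul, Complex.conj_I, Complex.conj_ofReal, map_ofNat,
    Prod.fst_neg, Prod.snd_neg, inner_neg_left]
  push_cast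
  ring_nf

lemma expP_mul_conj (l m x : ℝ × Ed n) :
    expP l x * (starRingEnd ℂ) (expP m x) = expP (l - m) x := by
  rw [conj_expP, ← expP_add, sub_eq_add_neg]

lemma norm_expP (l x : ℝ × Ed n) : ‖expP l x‖ = 1 := by
  rw [expP, Complex.norm_exp]
  simp

lemma continuous_expP (l : ℝ × Ed n) : Continuous (expP l) := by
  unfold expP
  fun_prop

lemma memLp_expP {μ : Measure (ℝ × Ed n)} [IsFiniteMeasure μ] (l : ℝ × Ed n) :
    MemLp (expP l) 2 μ :=
  MemLp.of_bound (continuous_expP l).aestronglyMeasurable 1 (by simp [norm_expP])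

end Exponentials

section Factorisation

variable {n : ℕ}

abbrev cylinder (S : Set (Ed n)) : Set (ℝ × Ed n) := Icc (-(1/2) : ℝ) (1/2) ×ˢ S

def intervalExpIntegral (a : ℝ) : ℂ :=
  ∫ x in Icc (-(1/2) : ℝ) (1/2), Complex.exp (2 * Real.pi * Complex.I * (a * x : ℝ))

def expIntegralOn (S : Set (Ed n)) (b : Ed n) : ℂ :=
  ∫ y in S, Complex.exp (2 * Real.pi * Complex.I * (inner ℝ b y : ℝ))

lemma setIntegral_cylinder_expP (S : Set (Ed n)) (l : ℝ × Ed n) :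
    ∫ x in cylinder S, expP l x = intervalExpIntegral l.1 * expIntegralOn S l.2 := by
  rw [intervalExpIntegral, expIntegralOn, ← setIntegral_prod_mul, Measure.volume_eq_prod]
  congr 1 with x
  rw [expP, ← Complex.exp_add]
  push_cast
  ring_nf

lemma setIntegral_cylinder_expP_mul_conj (S : Set (Ed n)) (l m : ℝ × Ed n) :
    ∫ x in cylinder S, expP l x * (starRingEnd ℂ) (expP m x)
      = intervalExpIntegral (l.1 - m.1) * expIntegralOn S (l.2 - m.2) := by
  simp_rw [expP_mul_conj]
  exact setIntegral_cylinder_expP S (l - m)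

lemma intervalExpIntegral_ne_zero {a : ℝ} (ha : ¬ ∃ k : ℤ, a = k) : intervalExpIntegral a ≠ 0 := by
  have h2πi : (2 * Real.pi * Complex.I : ℂ) ≠ 0 := by simp [Real.pi_ne_zero]
  have hc : (2 * Real.pi * Complex.I * a : ℂ) ≠ 0 :=
    mul_ne_zero h2πi (Complex.ofReal_ne_zero.mpr fun h ↦ ha ⟨0, by simp [h]⟩)
  have hinterval : intervalExpIntegral a
      = ∫ x in (-(1/2) : ℝ)..(1/2), Complex.exp ((2 * Real.pi * Complex.I * a) * x) := by
    rw [intervalExpIntegral, intervalIntegral.integral_of_le (by norm_num),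
      integral_Icc_eq_integral_Ioc]
    push_cast
    ring_nf
  rw [hinterval, integral_exp_mul_complex hc]
  refine div_ne_zero (sub_ne_zero.mpr fun h ↦ ha ?_) hc
  obtain ⟨k, hk⟩ := Complex.exp_eq_exp_iff_exists_int.mp h
  refine ⟨k, ?_⟩
  have : (2 * Real.pi * Complex.I) * a = (2 * Real.pi * Complex.I) * k := by
    push_cast at hk
    linear_combination hk
  exact_mod_cast mul_left_cancel₀ h2πi this

lemma expIntegralOn_zero (S : Set (Ed n)) : expIntegralOn S 0 = (volume S).toReal := by
  simp [expIntegralOn, Measure.real]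

end Factorisation

section AlphaT

variable {n : ℕ} {t : ℝ} {l m : ℝ × Ed n}

lemma not_int_sub_of_not_iff {a b : ℝ} (h : ¬ ((∃ k : ℤ, a = k) ↔ ∃ k : ℤ, b = k)) :
    ¬ ∃ k : ℤ, a - b = k := by
  rintro ⟨k, hk⟩
  exact h ⟨fun ⟨j, hj⟩ ↦ ⟨j - k, by push_cast; linarith⟩,
    fun ⟨j, hj⟩ ↦ ⟨j + k, by push_cast; linarith⟩⟩

lemma alphaT_of_int (h : ∃ k : ℤ, l.1 = k) : alphaT t l = l := if_pos h

lemma alphaT_of_not_int (h : ¬ ∃ k : ℤ, l.1 = k) : alphaT t l = l + (t, 0) := by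
  rw [alphaT, if_neg h]
  ext <;> simp

@[simp]
lemma alphaT_snd : (alphaT t l).2 = l.2 := by
  unfold alphaT
  split_ifs <;> rfl

lemma alphaT_fst_sub_alphaT_fst (h : (∃ k : ℤ, l.1 = k) ↔ ∃ k : ℤ, m.1 = k) :
    (alphaT t l).1 - (alphaT t m).1 = l.1 - m.1 := by
  by_cases hl : ∃ k : ℤ, l.1 = k
  · rw [alphaT_of_int hl, alphaT_of_int (h.mp hl)]
  · rw [alphaT_of_not_int hl, alphaT_of_not_int (mt h.mpr hl)]
    simp

end AlphaT

namespace Submodule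

variable {𝕜 E : Type*} [RCLike 𝕜] [NormedAddCommGroup E] [InnerProductSpace 𝕜 E]

lemma mem_orthogonal_span_iff {s : Set E} {v : E} :
    v ∈ (span 𝕜 s)ᗮ ↔ ∀ u ∈ s, inner 𝕜 u v = 0 := by
  rw [← span_singleton_le_iff_mem, ← isOrtho_iff_le, isOrtho_span]
  simp [inner_eq_zero_symm]

lemma orthogonal_le_orthogonal_orthogonal [CompleteSpace E] {K₀ K₁ : Submodule 𝕜 E}
    (h : K₀ ⟂ K₁) (htot : (K₀ ⊔ K₁)ᗮ = ⊥) : K₁ᗮ ≤ K₀ᗮᗮ := by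
  intro u hu
  obtain ⟨y, hy, z, hz, rfl⟩ := K₀ᗮ.exists_add_mem_mem_orthogonal u
  have hz₁ : z ∈ K₁ᗮ := orthogonal_le (isOrtho_iff_le.mp h.symm) hz
  have hy₁ : y ∈ K₁ᗮ := by simpa using K₁ᗮ.sub_mem hu hz₁
  have hy0 : y ∈ (K₀ ⊔ K₁)ᗮ := inf_orthogonal K₀ K₁ ▸ ⟨hy, hy₁⟩
  rw [htot, mem_bot] at hy0
  simpa [hy0] using hz

end Submodule

section L2

variable {n : ℕ} {μ : Measure (ℝ × Ed n)} [IsFiniteMeasure μ]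

variable (μ) in
def expLp (l : ℝ × Ed n) : Lp ℂ 2 μ := (memLp_expP l).toLp (expP l)

lemma inner_expLp_toLp {f : ℝ × Ed n → ℂ} (hf : MemLp f 2 μ) (l : ℝ × Ed n) :
    inner ℂ (expLp μ l) (hf.toLp f) = ∫ x, f x * (starRingEnd ℂ) (expP l x) ∂μ := by
  rw [expLp, L2.inner_def]
  refine integral_congr_ae ?_
  filter_upwards [(memLp_expP l).coeFn_toLp, hf.coeFn_toLp] with x hl hf
  rw [hl, hf, RCLike.inner_apply', mul_comm]

lemma orthogonal_span_expLp_eq_bot {L : Set (ℝ × Ed n)}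
    (hcomplete : ∀ f : ℝ × Ed n → ℂ, MemLp f 2 μ →
      (∀ l ∈ L, ∫ x, f x * (starRingEnd ℂ) (expP l x) ∂μ = 0) → f =ᵐ[μ] 0) :
    (Submodule.span ℂ (expLp μ '' L))ᗮ = ⊥ := by
  refine (Submodule.eq_bot_iff _).mpr fun u hu ↦ Lp.eq_zero_iff_ae_eq_zero.mpr ?_
  refine hcomplete u (Lp.memLp u) fun l hl ↦ ?_
  rw [← inner_expLp_toLp (Lp.memLp u), Lp.toLp_coeFn]
  exact Submodule.mem_orthogonal_span_iff.mp hu _ (mem_image_of_mem _ hl)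

end L2

section Spectrum

variable {n : ℕ} {S : Set (Ed n)} {L : Set (ℝ × Ed n)} {t : ℝ} {l m : ℝ × Ed n}

lemma expIntegralOn_sub_eq_zero (hspec : IsSpectrumP (cylinder S) L) (hl : l ∈ L) (hm : m ∈ L)
    (h : ¬ ((∃ k : ℤ, l.1 = k) ↔ ∃ k : ℤ, m.1 = k)) : expIntegralOn S (l.2 - m.2) = 0 := by
  have horth := hspec.1 l hl m hm (by rintro rfl; exact h Iff.rfl)
  rw [setIntegral_cylinder_expP_mul_conj] at horth
  exact (mul_eq_zero.mp horth).resolve_left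
    (intervalExpIntegral_ne_zero (not_int_sub_of_not_iff h))

lemma injOn_alphaT (hB : Bornology.IsBounded S) (hpos : 0 < volume S)
    (hspec : IsSpectrumP (cylinder S) L) : InjOn (alphaT t) L := by
  intro l hl m hm he
  have hsnd : l.2 = m.2 := by simpa using congrArg Prod.snd he
  by_cases h : (∃ k : ℤ, l.1 = k) ↔ ∃ k : ℤ, m.1 = k
  · have hfst := alphaT_fst_sub_alphaT_fst (t := t) h
    rw [he, sub_self] at hfst
    exact Prod.ext (by linarith) hsnd
  · have h0 := expIntegralOn_sub_eq_zero hspec hl hm h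
    rw [hsnd, sub_self, expIntegralOn_zero, Complex.ofReal_eq_zero] at h0
    exact absurd h0 (ENNReal.toReal_pos hpos.ne' hB.measure_lt_top.ne).ne'

lemma alphaT_image_orthogonal (hspec : IsSpectrumP (cylinder S) L) :
    ∀ l ∈ alphaT t '' L, ∀ m ∈ alphaT t '' L, l ≠ m →
      ∫ x in cylinder S, expP l x * (starRingEnd ℂ) (expP m x) = 0 := by
  rintro _ ⟨l, hl, rfl⟩ _ ⟨m, hm, rfl⟩ hne
  rw [setIntegral_cylinder_expP_mul_conj, alphaT_snd, alphaT_snd]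
  by_cases h : (∃ k : ℤ, l.1 = k) ↔ ∃ k : ℤ, m.1 = k
  · rw [alphaT_fst_sub_alphaT_fst h, ← setIntegral_cylinder_expP_mul_conj]
    exact hspec.1 l hl m hm (by rintro rfl; exact hne rfl)
  · rw [expIntegralOn_sub_eq_zero hspec hl hm h, mul_zero]

lemma isFiniteMeasure_restrict_cylinder (hB : Bornology.IsBounded S) :
    IsFiniteMeasure (volume.restrict (cylinder S)) :=
  isFiniteMeasure_restrict.mpr ((Metric.isBounded_Icc _ _).prod hB).measure_lt_top.ne

lemma integral_mul_conj_expP_add_eq_zero (hB : Bornology.IsBounded S)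
    (hspec : IsSpectrumP (cylinder S) L) {f : ℝ × Ed n → ℂ}
    (hf : MemLp f 2 (volume.restrict (cylinder S)))
    (hforth : ∀ l ∈ alphaT t '' L, ∫ x in cylinder S, f x * (starRingEnd ℂ) (expP l x) = 0)
    (hl : l ∈ L) (hint : ∃ k : ℤ, l.1 = k) :
    ∫ x in cylinder S, f x * (starRingEnd ℂ) (expP (l + (t, 0)) x) = 0 := by
  have := isFiniteMeasure_restrict_cylinder hB
  set μ := volume.restrict (cylinder S)
  set P : Set (ℝ × Ed n) := {m | ∃ k : ℤ, m.1 = k}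
  set K₀ := Submodule.span ℂ (expLp μ '' (L ∩ P))
  set K₁ := Submodule.span ℂ (expLp μ '' (L ∩ Pᶜ))
  have hortho : K₀ ⟂ K₁ := by
    refine Submodule.isOrtho_span.mpr ?_
    rintro _ ⟨a, ⟨ha, haint⟩, rfl⟩ _ ⟨b, ⟨hb, hbint⟩, rfl⟩
    refine (inner_expLp_toLp (memLp_expP b) a).trans ?_
    rw [setIntegral_cylinder_expP_mul_conj, expIntegralOn_sub_eq_zero hspec hb ha, mul_zero]
    exact fun h ↦ hbint (h.mpr haint)
  have htot : (K₀ ⊔ K₁)ᗮ = ⊥ := by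
    rw [← Submodule.span_union, ← image_union, inter_union_compl]
    exact orthogonal_span_expLp_eq_bot hspec.2
  have hu : expLp μ (l + (t, 0)) ∈ K₁ᗮ := by
    refine Submodule.mem_orthogonal_span_iff.mpr ?_
    rintro _ ⟨m, ⟨hm, hmint⟩, rfl⟩
    refine (inner_expLp_toLp (memLp_expP _) m).trans ?_
    rw [setIntegral_cylinder_expP_mul_conj, Prod.snd_add, add_zero,
      expIntegralOn_sub_eq_zero hspec hl hm fun h ↦ hmint (h.mp hint), mul_zero]
  have hF : hf.toLp f ∈ K₀ᗮ := by
    refine Submodule.mem_orthogonal_span_iff.mpr ?_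
    rintro _ ⟨m, ⟨hm, hmint⟩, rfl⟩
    rw [inner_expLp_toLp, ← alphaT_of_int (t := t) hmint]
    exact hforth _ (mem_image_of_mem _ hm)
  rw [← inner_expLp_toLp hf]
  exact Submodule.inner_left_of_mem_orthogonal hF
    (Submodule.orthogonal_le_orthogonal_orthogonal hortho htot hu)

lemma alphaT_image_complete (hB : Bornology.IsBounded S) (hspec : IsSpectrumP (cylinder S) L)
    (f : ℝ × Ed n → ℂ) (hf : MemLp f 2 (volume.restrict (cylinder S)))
    (hforth : ∀ l ∈ alphaT t '' L, ∫ x in cylinder S, f x * (starRingEnd ℂ) (expP l x) = 0) :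
    f =ᵐ[volume.restrict (cylinder S)] 0 := by
  set g : ℝ × Ed n → ℂ := fun x ↦ f x * (starRingEnd ℂ) (expP (t, 0) x)
  have hg_mul_conj (l x : ℝ × Ed n) :
      g x * (starRingEnd ℂ) (expP l x) = f x * (starRingEnd ℂ) (expP (l + (t, 0)) x) := by
    rw [expP_add, map_mul]
    ring
  have hg : MemLp g 2 (volume.restrict (cylinder S)) :=
    hf.of_le (hf.aestronglyMeasurable.mul
      (Complex.continuous_conj.comp (continuous_expP _)).aestronglyMeasurable)
      (ae_of_all _ fun x ↦ by simp [g, norm_expP])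
  have hg0 : g =ᵐ[volume.restrict (cylinder S)] 0 := by
    refine hspec.2 g hg fun l hl ↦ ?_
    simp_rw [hg_mul_conj]
    by_cases hint : ∃ k : ℤ, l.1 = k
    · exact integral_mul_conj_expP_add_eq_zero hB hspec hf hforth hl hint
    · rw [← alphaT_of_not_int hint]
      exact hforth _ (mem_image_of_mem _ hl)
  filter_upwards [hg0] with x hx
  simpa [g, ← norm_eq_zero (a := expP _ x), norm_expP] using hx

end Spectrum

theorem stmt14_general {n : ℕ} (S : Set (Ed n)) (hB : Bornology.IsBounded S)
    (hpos : 0 < volume S) (t : ℝ) (L : Set (ℝ × Ed n))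
    (hspec : IsSpectrumP ((Set.Icc (-(1/2) : ℝ) (1/2)) ×ˢ S) L) :
    Set.InjOn (alphaT t) L ∧
    IsSpectrumP ((Set.Icc (-(1/2) : ℝ) (1/2)) ×ˢ S) (alphaT t '' L) :=
  ⟨injOn_alphaT hB hpos hspec, alphaT_image_orthogonal hspec, alphaT_image_complete hB hspec⟩

theorem stmt14 {n : ℕ} (S : Set (Ed n)) (hB : Bornology.IsBounded S)
    (hM : MeasurableSet S) (hpos : 0 < volume S) (t : ℝ) (L : Set (ℝ × Ed n))
    (hspec : IsSpectrumP ((Set.Icc (-(1/2) : ℝ) (1/2)) ×ˢ S) L) :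
    Set.InjOn (alphaT t) L ∧
    IsSpectrumP ((Set.Icc (-(1/2) : ℝ) (1/2)) ×ˢ S) (alphaT t '' L) :=
  stmt14_general S hB hpos t L hspec
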